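/- Let S, P_A, P_B be unital complex algebras, σ_A, σ_B linear functionals on P_A, P_B with σ_A(1) = σ_B(1) = 1, and Θ_A, Θ_B unital algebra automorphisms of S⊗P_A and S⊗P_B, with extensions Θ̂_A, Θ̂_B to automorphisms of S⊗P_A⊗P_B (Θ̂_A acting on the first and second tensor factors, Θ̂_B on the first and third). If Θ̂_A ∘ Θ̂_B = Θ̂_B ∘ Θ̂_A, then the non-selective update maps commute: for every linear functional ω on S, J_A(J_B(ω)) = J_B(J_A(ω)), where J_X(φ)(C) := (φ⊗σ_X)(Θ_X(C⊗1)) for X ∈ {A, B}. In particular, when the two coupling zones are spacelike separated, so that both causal orders are admissible and causal factorisation yields the commutation hypothesis, the combined state update is independent of the choice of causal order. -/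

import Mathlib

open scoped TensorProduct

noncomputable section

variable {S PA PB : Type*} [Ring S] [Algebra ℂ S]
  [Ring PA] [Algebra ℂ PA] [Ring PB] [Algebra ℂ PB]

/-- The tensor product `ω ⊗ σ` of two linear functionals, determined by
`(ω ⊗ σ)(a ⊗ b) = ω a * σ b`. -/
def tensorFunctional {A B : Type*} [Ring A] [Algebra ℂ A]
    [Ring B] [Algebra ℂ B] (ω : A →ₗ[ℂ] ℂ) (σ : B →ₗ[ℂ] ℂ) :
    A ⊗[ℂ] B →ₗ[ℂ] ℂ :=
  (TensorProduct.lid ℂ ℂ).toLinearMap.comp (TensorProduct.map ω σ)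

/-- The partial trace `id_S ⊗ σ : S ⊗ P →ₗ S`, determined by `a ⊗ b ↦ σ(b) • a`. -/
def idTensorFunctional (S : Type*) [Ring S] [Algebra ℂ S] {P : Type*}
    [Ring P] [Algebra ℂ P] (σ : P →ₗ[ℂ] ℂ) : S ⊗[ℂ] P →ₗ[ℂ] S :=
  (TensorProduct.rid ℂ S).toLinearMap.comp (TensorProduct.map LinearMap.id σ)

/-- The rearrangement isomorphism `(S ⊗ P_A) ⊗ P_B ≃ (S ⊗ P_B) ⊗ P_A`
exchanging the two probe factors. -/
def probeSwap (S PA PB : Type*) [Ring S] [Algebra ℂ S]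
    [Ring PA] [Algebra ℂ PA] [Ring PB] [Algebra ℂ PB] :
    ((S ⊗[ℂ] PA) ⊗[ℂ] PB) ≃ₐ[ℂ] ((S ⊗[ℂ] PB) ⊗[ℂ] PA) :=
  (Algebra.TensorProduct.assoc ℂ ℂ ℂ S PA PB).trans
    ((Algebra.TensorProduct.congr AlgEquiv.refl
        (Algebra.TensorProduct.comm ℂ PA PB)).trans
      (Algebra.TensorProduct.assoc ℂ ℂ ℂ S PB PA).symm)

/-- The extension `Θ̂_A` of an automorphism `Θ_A` of `S ⊗ P_A` to
`(S ⊗ P_A) ⊗ P_B`, acting trivially on `P_B`. -/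
def hatA (ΘA : (S ⊗[ℂ] PA) ≃ₐ[ℂ] (S ⊗[ℂ] PA)) :
    ((S ⊗[ℂ] PA) ⊗[ℂ] PB) ≃ₐ[ℂ] ((S ⊗[ℂ] PA) ⊗[ℂ] PB) :=
  Algebra.TensorProduct.congr ΘA AlgEquiv.refl

/-- The extension `Θ̂_B` of an automorphism `Θ_B` of `S ⊗ P_B` to
`(S ⊗ P_A) ⊗ P_B`, acting on the first and third tensor factors and trivially
on `P_A`. -/
def hatB (ΘB : (S ⊗[ℂ] PB) ≃ₐ[ℂ] (S ⊗[ℂ] PB)) :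
    ((S ⊗[ℂ] PA) ⊗[ℂ] PB) ≃ₐ[ℂ] ((S ⊗[ℂ] PA) ⊗[ℂ] PB) :=
  (probeSwap S PA PB).trans ((Algebra.TensorProduct.congr ΘB AlgEquiv.refl).trans
    (probeSwap S PA PB).symm)

/-- The induced system observable `ε(O) = (id_S ⊗ σ)(Θ (1 ⊗ O))` of a probe
observable `O`. -/
def inducedObservable {P : Type*} [Ring P] [Algebra ℂ P] (σ : P →ₗ[ℂ] ℂ)
    (Θ : (S ⊗[ℂ] P) ≃ₐ[ℂ] (S ⊗[ℂ] P)) (O : P) : S :=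
  idTensorFunctional S σ (Θ ((1 : S) ⊗ₜ[ℂ] O))

/-- The non-selective state-update map `J(φ) : C ↦ (φ ⊗ σ)(Θ (C ⊗ 1))`. -/
def updateMap {P : Type*} [Ring P] [Algebra ℂ P] (σ : P →ₗ[ℂ] ℂ)
    (Θ : (S ⊗[ℂ] P) ≃ₐ[ℂ] (S ⊗[ℂ] P)) (φ : S →ₗ[ℂ] ℂ) : S →ₗ[ℂ] ℂ :=
  (tensorFunctional φ σ).comp (Θ.toLinearMap.comp ((TensorProduct.mk ℂ S P).flip (1 : P)))

/-! Both composite updates evaluate the product functional `(ω ⊗ σ_A) ⊗ σ_B` on `S ⊗ P_A ⊗ P_B`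
at `(C ⊗ 1) ⊗ 1` transported by `Θ̂_A` and `Θ̂_B`, only in opposite orders: the inner update is
absorbed into the functional, because `(J φ ⊗ τ)(z) = ((φ ⊗ σ) ⊗ τ)(Θ̂ (z ⊗ 1))` with the probe
factors rearranged. Commutation of `Θ̂_A` and `Θ̂_B` therefore gives the claim. -/

section

variable {P Q : Type*} [Ring P] [Algebra ℂ P] [Ring Q] [Algebra ℂ Q]

@[simp]
lemma tensorFunctional_tmul {A B : Type*} [Ring A] [Algebra ℂ A] [Ring B] [Algebra ℂ B]
    (ω : A →ₗ[ℂ] ℂ) (σ : B →ₗ[ℂ] ℂ) (a : A) (b : B) :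
    tensorFunctional ω σ (a ⊗ₜ[ℂ] b) = ω a * σ b := by
  simp [tensorFunctional]

@[simp]
lemma probeSwap_tmul (s : S) (p : P) (q : Q) :
    probeSwap S P Q ((s ⊗ₜ[ℂ] p) ⊗ₜ[ℂ] q) = (s ⊗ₜ[ℂ] q) ⊗ₜ[ℂ] p := by
  simp [probeSwap]

lemma probeSwap_symm : (probeSwap S P Q).symm = probeSwap S Q P := by
  have h : (probeSwap S P Q).toLinearMap ∘ₗ (probeSwap S Q P).toLinearMap = LinearMap.id :=
    TensorProduct.ext_threefold fun s q p => by simp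
  ext x
  rw [AlgEquiv.symm_apply_eq]
  exact (LinearMap.congr_fun h x).symm

@[simp]
lemma hatA_tmul (Θ : (S ⊗[ℂ] P) ≃ₐ[ℂ] (S ⊗[ℂ] P)) (x : S ⊗[ℂ] P) (q : Q) :
    hatA Θ (x ⊗ₜ[ℂ] q) = Θ x ⊗ₜ[ℂ] q := by
  simp [hatA]

lemma hatB_apply (Θ : (S ⊗[ℂ] Q) ≃ₐ[ℂ] (S ⊗[ℂ] Q)) (x : (S ⊗[ℂ] P) ⊗[ℂ] Q) :
    hatB Θ x = probeSwap S Q P (hatA Θ (probeSwap S P Q x)) := by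
  rw [← probeSwap_symm]
  rfl

lemma tensorFunctional_probeSwap (ω : S →ₗ[ℂ] ℂ) (σ : P →ₗ[ℂ] ℂ) (τ : Q →ₗ[ℂ] ℂ)
    (x : (S ⊗[ℂ] Q) ⊗[ℂ] P) :
    tensorFunctional (tensorFunctional ω σ) τ (probeSwap S Q P x)
      = tensorFunctional (tensorFunctional ω τ) σ x := by
  have h : (tensorFunctional (tensorFunctional ω σ) τ).comp (probeSwap S Q P).toLinearMap
      = tensorFunctional (tensorFunctional ω τ) σ :=
    TensorProduct.ext_threefold fun s q p => by simp [mul_right_comm]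
  exact LinearMap.congr_fun h x

lemma tensorFunctional_hatA_probeSwap_tmul_one (ω : S →ₗ[ℂ] ℂ) (σ : P →ₗ[ℂ] ℂ)
    (τ : Q →ₗ[ℂ] ℂ) (Θ : (S ⊗[ℂ] P) ≃ₐ[ℂ] (S ⊗[ℂ] P)) (z : S ⊗[ℂ] Q) :
    tensorFunctional (tensorFunctional ω σ) τ (hatA Θ (probeSwap S Q P (z ⊗ₜ[ℂ] 1)))
      = tensorFunctional (updateMap σ Θ ω) τ z := by
  induction z using TensorProduct.induction_on with
  | zero => simp
  | tmul s q => simp [updateMap]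
  | add x y hx hy => rw [TensorProduct.add_tmul, map_add, map_add, map_add, hx, hy, map_add]

end

lemma updateMap_updateMap_eq_tensorFunctional_hatB_hatA (σA : PA →ₗ[ℂ] ℂ) (σB : PB →ₗ[ℂ] ℂ)
    (ΘA : (S ⊗[ℂ] PA) ≃ₐ[ℂ] (S ⊗[ℂ] PA)) (ΘB : (S ⊗[ℂ] PB) ≃ₐ[ℂ] (S ⊗[ℂ] PB))
    (ω : S →ₗ[ℂ] ℂ) (C : S) :
    updateMap σA ΘA (updateMap σB ΘB ω) C
      = tensorFunctional (tensorFunctional ω σA) σB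
          (hatB ΘB (hatA ΘA ((C ⊗ₜ[ℂ] (1 : PA)) ⊗ₜ[ℂ] (1 : PB)))) := by
  rw [hatB_apply, tensorFunctional_probeSwap, hatA_tmul,
    tensorFunctional_hatA_probeSwap_tmul_one]
  rfl

lemma updateMap_updateMap_eq_tensorFunctional_hatA_hatB (σA : PA →ₗ[ℂ] ℂ) (σB : PB →ₗ[ℂ] ℂ)
    (ΘA : (S ⊗[ℂ] PA) ≃ₐ[ℂ] (S ⊗[ℂ] PA)) (ΘB : (S ⊗[ℂ] PB) ≃ₐ[ℂ] (S ⊗[ℂ] PB))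
    (ω : S →ₗ[ℂ] ℂ) (C : S) :
    updateMap σB ΘB (updateMap σA ΘA ω) C
      = tensorFunctional (tensorFunctional ω σA) σB
          (hatA ΘA (hatB ΘB ((C ⊗ₜ[ℂ] (1 : PA)) ⊗ₜ[ℂ] (1 : PB)))) := by
  rw [hatB_apply, probeSwap_tmul, hatA_tmul, tensorFunctional_hatA_probeSwap_tmul_one]
  rfl

theorem update_maps_commute_general
    (σA : PA →ₗ[ℂ] ℂ) (σB : PB →ₗ[ℂ] ℂ)
    (ΘA : (S ⊗[ℂ] PA) ≃ₐ[ℂ] (S ⊗[ℂ] PA)) (ΘB : (S ⊗[ℂ] PB) ≃ₐ[ℂ] (S ⊗[ℂ] PB))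
    (hcomm : ∀ x : (S ⊗[ℂ] PA) ⊗[ℂ] PB,
      (hatA ΘA) ((hatB ΘB) x) = (hatB ΘB) ((hatA ΘA) x))
    (ω : S →ₗ[ℂ] ℂ) :
    updateMap σA ΘA (updateMap σB ΘB ω) = updateMap σB ΘB (updateMap σA ΘA ω) := by
  ext C
  rw [updateMap_updateMap_eq_tensorFunctional_hatB_hatA,
    updateMap_updateMap_eq_tensorFunctional_hatA_hatB, hcomm]

/-- If the extended scattering maps `Θ̂_A` and `Θ̂_B` on `S ⊗ P_A ⊗ P_B`
commute (causal factorisation for spacelike separated coupling zones), then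
the non-selective state-update maps commute: `J_A(J_B(ω)) = J_B(J_A(ω))` for
every linear functional `ω` on `S`.  Hence the combined state update is
independent of the choice of admissible causal order. -/
theorem update_maps_commute
    (σA : PA →ₗ[ℂ] ℂ) (σB : PB →ₗ[ℂ] ℂ) (hσA : σA 1 = 1) (hσB : σB 1 = 1)
    (ΘA : (S ⊗[ℂ] PA) ≃ₐ[ℂ] (S ⊗[ℂ] PA)) (ΘB : (S ⊗[ℂ] PB) ≃ₐ[ℂ] (S ⊗[ℂ] PB))
    (hcomm : ∀ x : (S ⊗[ℂ] PA) ⊗[ℂ] PB,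
      (hatA ΘA) ((hatB ΘB) x) = (hatB ΘB) ((hatA ΘA) x))
    (ω : S →ₗ[ℂ] ℂ) :
    updateMap σA ΘA (updateMap σB ΘB ω) = updateMap σB ΘB (updateMap σA ΘA ω) :=
  update_maps_commute_general σA σB ΘA ΘB hcomm ω

end
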